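/- arXiv:2409.11268 — 8 statements merged into one kernel-verified Lean document; each statement's English description precedes it below -/
import Mathlib

section
/- For every k ≥ 0 and n ≥ 0, the total number of parts equal to 2^k in the image set ImB_2(n), namely Σ_{λ ∈ B(n), ℓ(λ)≥2} m_{2^k}(pre_2(λ)), equals Σ_{λ ∈ B(n)} ( Σ_{0 ≤ i < k/2} m_{2^i}(λ)·m_{2^{k-i}}(λ) + [k even]·C(m_{2^{k/2}}(λ), 2) ), i.e., it equals the number of binary partitions of n with two rooted parts 2^i and 2^{k-i}, summed over 0 ≤ i ≤ ⌊k/2⌋. -/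
/-!
Writing a binary partition as `t.map (2 ^ ·)` for a multiset `t` of exponents, `pre2` becomes
`2 ^ ·` applied to the sums of the 2-submultisets of `t`, so the multiplicity of `2 ^ k` counts
the pairs of exponents with sum `k`. Adding an exponent `j` to `t` creates exactly
`t.count (k - j)` new such pairs (if `j ≤ k`), and the closed formula `pairCount` grows by the
same amount: through the off-diagonal term `i = min j (k - j)` when `2 * j ≠ k`, and through
`choose (m + 1) 2 = choose m 2 + m` when `2 * j = k`.
-/

/-- `pre2 s` is the multiset of all pairwise products of two distinct entries
(by position) of the multiset `s`, i.e. the summands of `e₂` evaluated at `s`. -/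
def pre2 (s : Multiset ℕ) : Multiset ℕ := (Multiset.powersetCard 2 s).map Multiset.prod

open Classical in
/-- The finset of binary partitions of `n`: partitions all of whose parts are powers of 2. -/
noncomputable def binaryPartitions (n : ℕ) : Finset (Nat.Partition n) :=
  Finset.univ.filter fun l => ∀ p ∈ l.parts, ∃ i : ℕ, p = 2 ^ i

open Finset

def pairCount (c : ℕ → ℕ) (k : ℕ) : ℕ :=
  ∑ i ∈ range ((k + 1) / 2), c i * c (k - i) + if Even k then (c (k / 2)).choose 2 else 0

lemma mem_range_half_iff {i k : ℕ} : i ∈ range ((k + 1) / 2) ↔ 2 * i < k := by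
  rw [mem_range]; omega

lemma sum_range_half_mul_update (c : ℕ → ℕ) (j k : ℕ) :
    ∑ i ∈ range ((k + 1) / 2),
        (c i + if i = j then 1 else 0) * (c (k - i) + if k - i = j then 1 else 0) =
      ∑ i ∈ range ((k + 1) / 2), c i * c (k - i) + if 2 * j ≠ k ∧ j ≤ k then c (k - j) else 0 := by
  -- the product of the two indicators vanishes because `i < k - i`
  have hterm : ∀ i ∈ range ((k + 1) / 2),
      (c i + if i = j then 1 else 0) * (c (k - i) + if k - i = j then 1 else 0) =
        c i * c (k - i) +
          ((if i = j then c (k - i) else 0) + if i = k - j then (if j ≤ k then c i else 0) else 0) := by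
    intro i hi
    have := mem_range_half_iff.1 hi
    split_ifs <;> first | omega | ring
  simp only [sum_congr rfl hterm, sum_add_distrib, sum_ite_eq', mem_range_half_iff]
  split_ifs <;> omega

lemma choose_two_update (c : ℕ → ℕ) (j k : ℕ) :
    (if Even k then (c (k / 2) + if k / 2 = j then 1 else 0).choose 2 else 0) =
      (if Even k then (c (k / 2)).choose 2 else 0) + if 2 * j = k then c (k - j) else 0 := by
  by_cases h : 2 * j = k
  · obtain rfl : k / 2 = j := by omega
    have hk : Even k := ⟨k / 2, by omega⟩
    rw [if_pos rfl, if_pos hk, if_pos hk, if_pos h, Nat.choose_succ_succ', Nat.choose_one_right,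
      add_comm, show k - k / 2 = k / 2 by omega]
  · have : ¬(Even k ∧ k / 2 = j) := by rintro ⟨⟨m, rfl⟩, rfl⟩; omega
    split_ifs <;> simp_all

lemma pairCount_update (c : ℕ → ℕ) (j k : ℕ) :
    pairCount (fun i => c i + if i = j then 1 else 0) k =
      pairCount c k + if j ≤ k then c (k - j) else 0 := by
  rw [pairCount, pairCount, sum_range_half_mul_update, choose_two_update]
  split_ifs <;> omega

lemma count_map_add_left (j k : ℕ) (t : Multiset ℕ) :
    (t.map (j + ·)).count k = if j ≤ k then t.count (k - j) else 0 := by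
  split_ifs with h
  · obtain ⟨m, rfl⟩ := Nat.exists_eq_add_of_le h
    rw [Nat.add_sub_cancel_left, Multiset.count_map_eq_count' _ _ (add_right_injective j)]
  · exact Multiset.count_eq_zero.2 fun hk => by
      obtain ⟨m, -, rfl⟩ := Multiset.mem_map.1 hk
      omega

lemma map_sum_powersetCard_two_cons (j : ℕ) (t : Multiset ℕ) :
    (Multiset.powersetCard 2 (j ::ₘ t)).map Multiset.sum =
      (Multiset.powersetCard 2 t).map Multiset.sum + t.map (j + ·) := by
  simp [Multiset.powersetCard_cons, Multiset.powersetCard_one]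

lemma count_map_sum_powersetCard_two (t : Multiset ℕ) (k : ℕ) :
    ((Multiset.powersetCard 2 t).map Multiset.sum).count k = pairCount t.count k := by
  induction t using Multiset.induction with
  | empty => simp [pairCount]
  | cons j t ih =>
    have hcount : (j ::ₘ t).count = fun i => t.count i + if i = j then 1 else 0 :=
      funext fun i => Multiset.count_cons i j t
    rw [map_sum_powersetCard_two_cons, Multiset.count_add, ih, count_map_add_left, hcount,
      pairCount_update]

lemma pre2_map_two_pow (t : Multiset ℕ) :
    pre2 (t.map (2 ^ ·)) = ((Multiset.powersetCard 2 t).map Multiset.sum).map (2 ^ ·) := by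
  have prod_map_two_pow : ∀ u : Multiset ℕ, (u.map (2 ^ ·)).prod = 2 ^ u.sum := by
    intro u
    induction u using Multiset.induction with
    | empty => simp
    | cons a u ih => simp [ih, pow_add]
  simp [pre2, Multiset.powersetCard_map, Multiset.map_map, prod_map_two_pow]

lemma count_two_pow_pre2 (s : Multiset ℕ) (hs : ∀ p ∈ s, ∃ i : ℕ, p = 2 ^ i) (k : ℕ) :
    (pre2 s).count (2 ^ k) = pairCount (fun i => s.count (2 ^ i)) k := by
  have hinj : Function.Injective ((2 : ℕ) ^ ·) := Nat.pow_right_injective le_rfl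
  obtain ⟨t, rfl⟩ : ∃ t : Multiset ℕ, t.map (2 ^ ·) = s := by
    refine ⟨s.map (Nat.log 2), ?_⟩
    rw [Multiset.map_map]
    refine (Multiset.map_congr rfl fun p hp => ?_).trans s.map_id
    obtain ⟨i, rfl⟩ := hs p hp
    simp [Nat.log_pow]
  simp only [pre2_map_two_pow, Multiset.count_map_eq_count' _ _ hinj]
  rw [count_map_sum_powersetCard_two]

theorem stmt_1 (k n : ℕ) :
    (∑ l ∈ (binaryPartitions n).filter (fun l => 2 ≤ Multiset.card l.parts),
        (pre2 l.parts).count (2 ^ k)) =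
      ∑ l ∈ binaryPartitions n,
        ((∑ i ∈ Finset.range ((k + 1) / 2),
            l.parts.count (2 ^ i) * l.parts.count (2 ^ (k - i)))
          + if Even k then Nat.choose (l.parts.count (2 ^ (k / 2))) 2 else 0) := by
  rw [sum_filter_of_ne]
  · refine sum_congr rfl fun l hl => ?_
    simp only [binaryPartitions, mem_filter] at hl
    exact count_two_pow_pre2 l.parts hl.2 k
  · intro l _ hne
    by_contra hcard
    exact hne (by simp [pre2, Multiset.powersetCard_eq_empty 2 (not_le.1 hcard)])
end

section
/- For all n ≥ 0, a_n = Σ_{i ≥ 1} (i-1)·|B(n-i)|, where the sum is over all integers i with 1 ≤ i ≤ n. -/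
/-- `a n = m₁(ImB₂(n))`: the total number of parts equal to 1 in the image of `pre2`
on binary partitions of `n` with at least two parts; by injectivity this equals
`∑_{λ ∈ B(n)} C(m₁(λ), 2)`. -/
noncomputable def a (n : ℕ) : ℕ :=
  ∑ l ∈ binaryPartitions n, Nat.choose (l.parts.count 1) 2

open Finset

theorem Nat.sum_Icc_sub_one_eq_choose_two (m : ℕ) : ∑ i ∈ Icc 1 m, (i - 1) = m.choose 2 := by
  rw [← Finset.Ico_add_one_right_eq_Icc, Finset.sum_Ico_eq_sum_range]
  simp [Finset.sum_range_id, Nat.choose_two_right]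

theorem Nat.choose_two_eq_sum_Icc_ite {m n : ℕ} (h : m ≤ n) :
    m.choose 2 = ∑ i ∈ Icc 1 n, if i ≤ m then i - 1 else 0 := by
  rw [← sum_filter, ← Nat.sum_Icc_sub_one_eq_choose_two]
  congr 1
  ext i
  simp only [mem_filter, mem_Icc]
  omega

namespace Nat.Partition

variable {n : ℕ}

theorem count_one_le (p : n.Partition) : p.parts.count 1 ≤ n :=
  calc p.parts.count 1 ≤ Multiset.card p.parts := Multiset.count_le_card _ _
    _ = Multiset.card p.parts • 1 := by rw [smul_eq_mul, mul_one]
    _ ≤ p.parts.sum := Multiset.card_nsmul_le_sum fun _ hx => p.parts_pos hx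
    _ = n := p.parts_sum

def replicatePartEquiv {a i : ℕ} (ha : 0 < a) (h : i * a ≤ n) :
    {p : n.Partition // i ≤ p.parts.count a} ≃ (n - i * a).Partition where
  toFun p :=
    { parts := p.1.parts - Multiset.replicate i a
      parts_pos := fun hx => p.1.parts_pos (Multiset.mem_of_le (Multiset.sub_le_self _ _) hx)
      parts_sum := by
        have hs := congrArg Multiset.sum
          (tsub_add_cancel_of_le (Multiset.le_count_iff_replicate_le.mp p.2))
        rw [Multiset.sum_add, Multiset.sum_replicate, p.1.parts_sum, smul_eq_mul] at hs
        omega }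
  invFun q :=
    ⟨{ parts := Multiset.replicate i a + q.parts
       parts_pos := fun hx => by
         rcases Multiset.mem_add.mp hx with hx | hx
         · rwa [Multiset.eq_of_mem_replicate hx]
         · exact q.parts_pos hx
       parts_sum := by
         rw [Multiset.sum_add, Multiset.sum_replicate, q.parts_sum, smul_eq_mul]
         omega }, by simp⟩
  left_inv p := Subtype.ext <| Partition.ext <|
    add_tsub_cancel_of_le (Multiset.le_count_iff_replicate_le.mp p.2)
  right_inv q := Partition.ext <| add_tsub_cancel_left _ _

theorem card_filter_le_count_restricted (P : ℕ → Prop) [DecidablePred P] {a i : ℕ}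
    (ha : 0 < a) (hPa : P a) (h : i * a ≤ n) :
    #{p ∈ restricted n P | i ≤ p.parts.count a} = #(restricted (n - i * a) P) := by
  let e := replicatePartEquiv ha h
  refine card_bij' (fun p hp => e ⟨p, (mem_filter.mp hp).2⟩) (fun q _ => (e.symm q).1)
    ?_ ?_ (fun p _ => congrArg Subtype.val (e.left_inv _)) (fun q _ => e.right_inv q)
  · intro p hp
    simp only [restricted, mem_filter, mem_univ, true_and] at hp ⊢
    exact fun x hx => hp.1 x (Multiset.mem_of_le (Multiset.sub_le_self _ _) hx)
  · intro q hq
    simp only [restricted, mem_filter, mem_univ, true_and] at hq ⊢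
    refine ⟨fun x hx => ?_, (e.symm q).2⟩
    rcases Multiset.mem_add.mp hx with hx | hx
    · rwa [Multiset.eq_of_mem_replicate hx]
    · exact hq x hx

theorem sum_choose_two_count_one_restricted (P : ℕ → Prop) [DecidablePred P] (hP : P 1) :
    ∑ p ∈ restricted n P, (p.parts.count 1).choose 2
      = ∑ i ∈ Icc 1 n, (i - 1) * #(restricted (n - i) P) :=
  calc ∑ p ∈ restricted n P, (p.parts.count 1).choose 2
      = ∑ i ∈ Icc 1 n, ∑ p ∈ restricted n P, if i ≤ p.parts.count 1 then i - 1 else 0 := by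
        simp_rw [Nat.choose_two_eq_sum_Icc_ite (count_one_le _)]
        exact sum_comm
    _ = ∑ i ∈ Icc 1 n, (i - 1) * #(restricted (n - i) P) := by
        refine sum_congr rfl fun i hi => ?_
        have hin : i * 1 ≤ n := by simpa using (mem_Icc.mp hi).2
        rw [← sum_filter, sum_const, smul_eq_mul, mul_comm,
          card_filter_le_count_restricted P one_pos hP hin, mul_one]

end Nat.Partition

open Classical in
theorem binaryPartitions_eq_restricted (n : ℕ) :
    binaryPartitions n = Nat.Partition.restricted n fun p => ∃ i : ℕ, p = 2 ^ i :=
  rfl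

theorem stmt_2 (n : ℕ) :
    a n = ∑ i ∈ Finset.Icc 1 n, (i - 1) * (binaryPartitions (n - i)).card := by
  classical
  simp only [a, binaryPartitions_eq_restricted]
  exact Nat.Partition.sum_choose_two_count_one_restricted _ ⟨0, rfl⟩
end

section
/- For all n ≥ 0, a_n = Σ_{i ≥ 0} C(n-2i, 2)·|B(i)|, where the sum is over all integers i with 0 ≤ i ≤ ⌊n/2⌋ and C(m,2) = m(m-1)/2 for m ≥ 0 (and 0 for m < 2). -/
/-
Halving the parts different from 1 is a bijection between the binary partitions of `n` with
exactly `n - 2 * i` parts equal to 1 and the binary partitions of `i`: every part `≠ 1` of a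
binary partition is even, so `n - m₁(λ)` is even and the halved parts again form a binary
partition. Grouping the sum defining `a n` by `i = (n - m₁(λ)) / 2` gives the formula.
-/

lemma mem_binaryPartitions {n : ℕ} {l : Nat.Partition n} :
    l ∈ binaryPartitions n ↔ ∀ p ∈ l.parts, ∃ i : ℕ, p = 2 ^ i := by
  classical
  simp [binaryPartitions]

lemma even_of_mem_binaryPartitions {n p : ℕ} {l : Nat.Partition n} (hl : l ∈ binaryPartitions n)
    (hp : p ∈ l.parts) (hp1 : p ≠ 1) : Even p := by
  obtain ⟨k, rfl⟩ := mem_binaryPartitions.mp hl p hp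
  exact Nat.even_pow.mpr ⟨even_two, by rintro rfl; exact hp1 rfl⟩

lemma Nat.Partition.count_one_add_sum_filter_ne_one {n : ℕ} (l : Nat.Partition n) :
    l.parts.count 1 + (l.parts.filter (· ≠ 1)).sum = n := by
  conv_rhs => rw [← l.parts_sum, ← l.parts.filter_add_not (· = 1), Multiset.filter_eq',
    Multiset.sum_add]
  simp

lemma exists_count_one_add_two_mul_eq {n : ℕ} {l : Nat.Partition n}
    (hl : l ∈ binaryPartitions n) : ∃ j, l.parts.count 1 + 2 * j = n := by
  have hsum := l.count_one_add_sum_filter_ne_one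
  obtain ⟨j, hj⟩ : 2 ∣ (l.parts.filter (· ≠ 1)).sum := Multiset.dvd_sum fun p hp =>
    have hp := Multiset.mem_filter.mp hp
    (even_of_mem_binaryPartitions hl hp.1 hp.2).two_dvd
  exact ⟨j, hj ▸ hsum⟩

namespace Nat.Partition

def doubleAddOnes {n i : ℕ} (h : 2 * i ≤ n) (μ : Nat.Partition i) : Nat.Partition n where
  parts := Multiset.replicate (n - 2 * i) 1 + μ.parts.map (2 * ·)
  parts_pos := by
    intro p hp
    rcases Multiset.mem_add.mp hp with hp | hp
    · rw [Multiset.eq_of_mem_replicate hp]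
      exact Nat.one_pos
    · obtain ⟨x, hx, rfl⟩ := Multiset.mem_map.mp hp
      have := μ.parts_pos hx
      omega
  parts_sum := by
    rw [Multiset.sum_add, Multiset.sum_replicate, Multiset.sum_map_mul_left, Multiset.map_id',
      μ.parts_sum, smul_eq_mul, mul_one]
    omega

variable {n i : ℕ} (h : 2 * i ≤ n)

lemma count_one_doubleAddOnes (μ : Nat.Partition i) :
    (doubleAddOnes h μ).parts.count 1 = n - 2 * i := by
  simp [doubleAddOnes]

lemma doubleAddOnes_mem_binaryPartitions {μ : Nat.Partition i} (hμ : μ ∈ binaryPartitions i) :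
    doubleAddOnes h μ ∈ binaryPartitions n := by
  refine mem_binaryPartitions.mpr fun p hp => ?_
  rcases Multiset.mem_add.mp hp with hp | hp
  · exact ⟨0, Multiset.eq_of_mem_replicate hp⟩
  · obtain ⟨x, hx, rfl⟩ := Multiset.mem_map.mp hp
    obtain ⟨k, rfl⟩ := mem_binaryPartitions.mp hμ x hx
    exact ⟨k + 1, by ring⟩

lemma doubleAddOnes_injective : Function.Injective (doubleAddOnes (i := i) h) := by
  intro μ₁ μ₂ hμ
  have hmap : μ₁.parts.map (2 * ·) = μ₂.parts.map (2 * ·) :=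
    add_left_cancel (congrArg Nat.Partition.parts hμ)
  exact Nat.Partition.ext <|
    Multiset.map_injective (fun a b (hab : 2 * a = 2 * b) => by omega) hmap

lemma exists_doubleAddOnes_eq {l : Nat.Partition n} (hl : l ∈ binaryPartitions n)
    (hcount : l.parts.count 1 = n - 2 * i) :
    ∃ μ ∈ binaryPartitions i, doubleAddOnes h μ = l := by
  set t := l.parts.filter (· ≠ 1)
  have ht : ∀ p ∈ t, p ≠ 1 ∧ Even p := fun p hp =>
    have hp := Multiset.mem_filter.mp hp
    ⟨hp.2, even_of_mem_binaryPartitions hl hp.1 hp.2⟩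
  have hdouble : (t.map (· / 2)).map (2 * ·) = t := by
    rw [Multiset.map_map]
    exact (Multiset.map_congr rfl fun p hp => Nat.two_mul_div_two_of_even (ht p hp).2).trans
      (Multiset.map_id t)
  have hsum : (t.map (· / 2)).sum = i := by
    have hl_sum : l.parts.count 1 + t.sum = n := l.count_one_add_sum_filter_ne_one
    rw [← hdouble, Multiset.sum_map_mul_left, Multiset.map_id'] at hl_sum
    omega
  let μ : Nat.Partition i :=
    { parts := t.map (· / 2)
      parts_pos := by
        intro q hq
        obtain ⟨p, hp, rfl⟩ := Multiset.mem_map.mp hq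
        have := l.parts_pos (Multiset.mem_of_mem_filter hp)
        have := ht p hp
        grind
      parts_sum := hsum }
  refine ⟨μ, mem_binaryPartitions.mpr fun q hq => ?_, Nat.Partition.ext ?_⟩
  · obtain ⟨p, hp, rfl⟩ := Multiset.mem_map.mp hq
    obtain ⟨k, rfl⟩ := mem_binaryPartitions.mp hl p (Multiset.mem_of_mem_filter hp)
    have hk : k ≠ 0 := by rintro rfl; exact (ht 1 hp).1 rfl
    exact ⟨k - 1, by rw [← Nat.pow_div (Nat.one_le_iff_ne_zero.mpr hk) two_pos, pow_one]⟩
  · change Multiset.replicate (n - 2 * i) 1 + (t.map (· / 2)).map (2 * ·) = l.parts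
    rw [hdouble, ← hcount, ← Multiset.filter_eq', Multiset.filter_add_not]

end Nat.Partition

open Nat.Partition in
lemma card_binaryPartitions_filter_count_one_eq {n i : ℕ} (h : 2 * i ≤ n) :
    ((binaryPartitions n).filter (fun l => l.parts.count 1 = n - 2 * i)).card =
      (binaryPartitions i).card := by
  refine (Finset.card_bij (fun μ _ => doubleAddOnes h μ) (fun μ hμ => ?_)
    (fun μ₁ _ μ₂ _ hμ => doubleAddOnes_injective h hμ) (fun l hl => ?_)).symm
  · exact Finset.mem_filter.mpr
      ⟨doubleAddOnes_mem_binaryPartitions h hμ, count_one_doubleAddOnes h μ⟩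
  · obtain ⟨hl, hcount⟩ := Finset.mem_filter.mp hl
    obtain ⟨μ, hμ, rfl⟩ := exists_doubleAddOnes_eq h hl hcount
    exact ⟨μ, hμ, rfl⟩

theorem stmt_3 (n : ℕ) :
    a n = ∑ i ∈ Finset.range (n / 2 + 1),
      Nat.choose (n - 2 * i) 2 * (binaryPartitions i).card := by
  have hmaps : ∀ l ∈ binaryPartitions n,
      (n - l.parts.count 1) / 2 ∈ Finset.range (n / 2 + 1) := fun l _ =>
    Finset.mem_range.mpr (Nat.lt_succ_of_le (Nat.div_le_div_right (Nat.sub_le _ _)))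
  rw [a, ← Finset.sum_fiberwise_of_maps_to hmaps]
  refine Finset.sum_congr rfl fun i hi => ?_
  have h2i : 2 * i ≤ n := by have := Finset.mem_range.mp hi; omega
  have hfiber : (binaryPartitions n).filter (fun l => (n - l.parts.count 1) / 2 = i) =
      (binaryPartitions n).filter (fun l => l.parts.count 1 = n - 2 * i) := by
    refine Finset.filter_congr fun l hl => ?_
    obtain ⟨j, hj⟩ := exists_count_one_add_two_mul_eq hl
    omega
  rw [hfiber, Finset.sum_congr rfl fun l hl => by rw [(Finset.mem_filter.mp hl).2],
    Finset.sum_const, smul_eq_mul, mul_comm, card_binaryPartitions_filter_count_one_eq h2i]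
end

section
/- For all n ≥ 0, as an identity of integers, (n-3)·b_n = Σ_{k=1}^{n} (β(k) + (-1)^k + 2)·b_{n-k}, where β(k) = Σ_{2^i | k} 2^i is the sum of the divisors of k that are powers of 2. -/
/-- `b n = m₂(ImB₂(n))`: the total number of parts equal to 2 in the image of `pre2`
on binary partitions of `n` with at least two parts; by injectivity this equals
`∑_{λ ∈ B(n)} m₁(λ)·m₂(λ)`. -/
noncomputable def b (n : ℕ) : ℕ :=
  ∑ l ∈ binaryPartitions n, (l.parts.count 1) * (l.parts.count 2)

open Classical in
/-- `beta k` is the sum of the divisors of `k` that are powers of 2. -/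
noncomputable def beta (k : ℕ) : ℕ :=
  ∑ d ∈ (Nat.divisors k).filter (fun d => ∃ i : ℕ, d = 2 ^ i), d


/-!
Write `f λ = m₁(λ) m₂(λ)`, so that `b n = ∑_{λ ∈ B(n)} f λ`. For a power of two `t`, deleting
`j ≥ 1` copies of `t` from `λ ∈ B(n)` is a bijection onto the pairs `(k, μ)` with `t ∣ k`,
`1 ≤ k ≤ n`, `μ ∈ B(n - k)` (namely `k = j t`); hence `∑_{t ∣ k} b(n - k)` is the sum over
`λ ∈ B(n)` of `∑_{j=1}^{m_t(λ)} f(λ - j·t)`. Expanding `β(k) = ∑_{t ∣ k} t` and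
`(-1)^k + 2 = 1 + 2·[2 ∣ k]` turns the right-hand side into a sum over `λ ∈ B(n)` alone. Deleting
copies of `t ∉ {1, 2}` does not change `f`, while deleting copies of `1` or `2` produces triangular
numbers; together with `∑_t t·m_t(λ) = n` the contribution of `λ` collapses to `(n - 3) f λ`.
-/

open Finset

noncomputable def binaryParts (n : ℕ) : Finset (Multiset ℕ) :=
  (binaryPartitions n).image Nat.Partition.parts

lemma mem_binaryParts {n : ℕ} {s : Multiset ℕ} :
    s ∈ binaryParts n ↔ s.sum = n ∧ ∀ p ∈ s, ∃ i : ℕ, p = 2 ^ i := by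
  simp only [binaryParts, binaryPartitions, mem_image, mem_filter, mem_univ, true_and]
  constructor
  · rintro ⟨l, hl, rfl⟩
    exact ⟨l.parts_sum, hl⟩
  · rintro ⟨hsum, hpow⟩
    refine ⟨⟨s, fun hp => ?_, hsum⟩, hpow, rfl⟩
    obtain ⟨i, rfl⟩ := hpow _ hp
    positivity

def mulCountOneTwo (s : Multiset ℕ) : ℤ := (s.count 1 : ℤ) * s.count 2

lemma b_eq_sum_binaryParts (n : ℕ) : (b n : ℤ) = ∑ s ∈ binaryParts n, mulCountOneTwo s := by
  rw [b, binaryParts, sum_image fun _ _ _ _ h => Nat.Partition.ext h]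
  push_cast
  rfl

open Classical in
noncomputable def powersOfTwoUpTo (n : ℕ) : Finset ℕ :=
  (Icc 1 n).filter fun d => ∃ i : ℕ, d = 2 ^ i

lemma mem_powersOfTwoUpTo {n d : ℕ} :
    d ∈ powersOfTwoUpTo n ↔ (1 ≤ d ∧ d ≤ n) ∧ ∃ i : ℕ, d = 2 ^ i := by
  simp [powersOfTwoUpTo]

lemma toFinset_subset_of_mem_binaryParts {n : ℕ} {s : Multiset ℕ} (hs : s ∈ binaryParts n) :
    s.toFinset ⊆ powersOfTwoUpTo n := by
  obtain ⟨hsum, hpow⟩ := mem_binaryParts.1 hs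
  intro p hp
  rw [Multiset.mem_toFinset] at hp
  obtain ⟨i, rfl⟩ := hpow p hp
  exact mem_powersOfTwoUpTo.2 ⟨⟨Nat.one_le_two_pow, hsum ▸ Multiset.le_sum_of_mem hp⟩, i, rfl⟩

def removalSum {M : Type*} [AddCommMonoid M] (f : Multiset ℕ → M) (t : ℕ) (s : Multiset ℕ) : M :=
  ∑ j ∈ Icc 1 (s.count t), f (s - Multiset.replicate j t)

lemma removalSum_of_count_eq_zero {M : Type*} [AddCommMonoid M] (f : Multiset ℕ → M)
    {t : ℕ} {s : Multiset ℕ} (h : s.count t = 0) : removalSum f t s = 0 := by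
  simp [removalSum, h]

lemma sum_sub_replicate_add_mul {s : Multiset ℕ} {j t : ℕ} (hj : j ≤ s.count t) :
    (s - Multiset.replicate j t).sum + j * t = s.sum := by
  rw [← smul_eq_mul, ← Multiset.sum_replicate, ← Multiset.sum_add,
    tsub_add_cancel_of_le (Multiset.le_count_iff_replicate_le.1 hj)]

lemma add_replicate_mem_binaryParts {m t j : ℕ} {μ : Multiset ℕ} (hμ : μ ∈ binaryParts m)
    (ht : ∃ i : ℕ, t = 2 ^ i) : μ + Multiset.replicate j t ∈ binaryParts (m + j * t) := by
  obtain ⟨hsum, hpow⟩ := mem_binaryParts.1 hμ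
  refine mem_binaryParts.2 ⟨by simp [hsum], fun p hp => ?_⟩
  rcases Multiset.mem_add.1 hp with h | h
  · exact hpow p h
  · rwa [Multiset.eq_of_mem_replicate h]

theorem sum_removalSum_binaryParts {M : Type*} [AddCommMonoid M] (f : Multiset ℕ → M)
    {n t : ℕ} (ht : ∃ i : ℕ, t = 2 ^ i) :
    ∑ s ∈ binaryParts n, removalSum f t s =
      ∑ k ∈ (Icc 1 n).filter (t ∣ ·), ∑ μ ∈ binaryParts (n - k), f μ := by
  have ht0 : 0 < t := by obtain ⟨i, rfl⟩ := ht; positivity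
  simp only [removalSum]
  rw [sum_sigma', sum_sigma']
  refine sum_nbij' (fun p => ⟨p.2 * t, p.1 - Multiset.replicate p.2 t⟩)
    (fun q => ⟨q.2 + Multiset.replicate (q.1 / t) t, q.1 / t⟩) ?_ ?_ ?_ ?_ fun _ _ => rfl
  · rintro ⟨s, j⟩ hp
    simp only [mem_sigma, mem_Icc] at hp ⊢
    obtain ⟨hs, hj, hjs⟩ := hp
    obtain ⟨hsum, hpow⟩ := mem_binaryParts.1 hs
    have hsplit := sum_sub_replicate_add_mul hjs
    refine ⟨mem_filter.2 ⟨mem_Icc.2 ⟨Nat.one_le_iff_ne_zero.2 (by positivity), by omega⟩,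
      dvd_mul_left t j⟩, mem_binaryParts.2 ⟨by omega, fun p hp => ?_⟩⟩
    exact hpow p (Multiset.mem_of_le tsub_le_self hp)
  · rintro ⟨k, μ⟩ hq
    simp only [mem_sigma, mem_filter, mem_Icc] at hq ⊢
    obtain ⟨⟨⟨hk, hkn⟩, hdvd⟩, hμ⟩ := hq
    have hk' : k / t * t = k := Nat.div_mul_cancel hdvd
    refine ⟨by simpa [hk', hkn] using add_replicate_mem_binaryParts (j := k / t) hμ ht, ?_, ?_⟩
    · exact (Nat.one_le_div_iff ht0).2 (Nat.le_of_dvd hk hdvd)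
    · simp
  · rintro ⟨s, j⟩ hp
    simp only [mem_sigma, mem_Icc] at hp
    simp [Nat.mul_div_cancel j ht0,
      tsub_add_cancel_of_le (Multiset.le_count_iff_replicate_le.1 hp.2.2)]
  · rintro ⟨k, μ⟩ hq
    simp only [mem_sigma, mem_filter] at hq
    simp [Nat.div_mul_cancel hq.1.2]

lemma sum_filter_dvd_b_sub {n t : ℕ} (ht : ∃ i : ℕ, t = 2 ^ i) :
    ∑ k ∈ (Icc 1 n).filter (t ∣ ·), (b (n - k) : ℤ) =
      ∑ s ∈ binaryParts n, removalSum mulCountOneTwo t s := by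
  simp only [b_eq_sum_binaryParts]
  exact (sum_removalSum_binaryParts _ ht).symm

lemma sum_beta_mul {R : Type*} [NonAssocSemiring R] (n : ℕ) (g : ℕ → R) :
    ∑ k ∈ Icc 1 n, (beta k : R) * g k =
      ∑ d ∈ powersOfTwoUpTo n, (d : R) * ∑ k ∈ (Icc 1 n).filter (d ∣ ·), g k := by
  simp only [beta, Nat.cast_sum, sum_mul, mul_sum]
  refine sum_comm' fun k d => ?_
  simp only [mem_powersOfTwoUpTo, mem_Icc, mem_filter, Nat.mem_divisors]
  constructor
  · rintro ⟨hk, ⟨hdk, -⟩, hd⟩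
    exact ⟨⟨hk, hdk⟩, ⟨Nat.pos_of_dvd_of_pos hdk (by omega),
      (Nat.le_of_dvd (by omega) hdk).trans hk.2⟩, hd⟩
  · rintro ⟨⟨hk, hdk⟩, -, hd⟩
    exact ⟨hk, ⟨hdk, by omega⟩, hd⟩

lemma sum_neg_one_pow_add_two_mul {R : Type*} [CommRing R] (s : Finset ℕ) (g : ℕ → R) :
    ∑ k ∈ s, ((-1) ^ k + 2) * g k = ∑ k ∈ s, g k + 2 * ∑ k ∈ s.filter (2 ∣ ·), g k := by
  rw [sum_filter, mul_sum, ← sum_add_distrib]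
  refine sum_congr rfl fun k _ => ?_
  rcases Nat.even_or_odd k with hk | hk
  · simp [hk.neg_one_pow, even_iff_two_dvd.1 hk]
    ring
  · simp [hk.neg_one_pow, Nat.not_even_iff_odd.2 hk, ← even_iff_two_dvd]
    ring

lemma two_mul_sum_Icc_sub (m : ℕ) :
    2 * ∑ j ∈ Icc 1 m, ((m - j : ℕ) : ℤ) = m * (m - 1) := by
  rw [← Ico_add_one_right_eq_Icc, sum_Ico_reflect (fun j => (j : ℤ)) 1 le_rfl,
    Nat.add_sub_cancel, Nat.sub_self, Nat.Ico_zero_eq_range, ← Nat.cast_sum, mul_comm,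
    ← Nat.cast_ofNat, ← Nat.cast_mul, sum_range_id_mul_two]
  rcases m with _ | m <;> simp

lemma removalSum_mulCountOneTwo_of_ne {t : ℕ} (h1 : t ≠ 1) (h2 : t ≠ 2) (s : Multiset ℕ) :
    removalSum mulCountOneTwo t s = s.count t * mulCountOneTwo s := by
  simp [removalSum, mulCountOneTwo, Multiset.count_sub, Multiset.count_replicate, h1, h2]

lemma two_mul_removalSum_mulCountOneTwo_one (s : Multiset ℕ) :
    2 * removalSum mulCountOneTwo 1 s = s.count 2 * (s.count 1 * (s.count 1 - 1)) := by
  simp only [removalSum, mulCountOneTwo, Multiset.count_sub, Multiset.count_replicate_self,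
    Multiset.count_replicate, if_neg (by decide : (1 : ℕ) ≠ 2), Nat.sub_zero, ← sum_mul]
  rw [← mul_assoc, two_mul_sum_Icc_sub, mul_comm]

lemma two_mul_removalSum_mulCountOneTwo_two (s : Multiset ℕ) :
    2 * removalSum mulCountOneTwo 2 s = s.count 1 * (s.count 2 * (s.count 2 - 1)) := by
  simp only [removalSum, mulCountOneTwo, Multiset.count_sub, Multiset.count_replicate_self,
    Multiset.count_replicate, if_neg (by decide : (2 : ℕ) ≠ 1), Nat.sub_zero, ← mul_sum]
  rw [mul_left_comm, two_mul_sum_Icc_sub]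

lemma sum_mul_removalSum_mulCountOneTwo {D : Finset ℕ} {s : Multiset ℕ} (hD : s.toFinset ⊆ D) :
    ∑ d ∈ D, (d : ℤ) * removalSum mulCountOneTwo d s + removalSum mulCountOneTwo 1 s
      + 2 * removalSum mulCountOneTwo 2 s = ((s.sum : ℤ) - 3) * mulCountOneTwo s := by
  set g : ℕ → ℤ := fun d => d * (removalSum mulCountOneTwo d s - s.count d * mulCountOneTwo s)
  have hg_of_notMem {d : ℕ} (hd : d ∉ D) : g d = 0 := by
    have hcount : s.count d = 0 :=
      Multiset.count_eq_zero.2 fun h => hd (hD (Multiset.mem_toFinset.2 h))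
    simp [g, hcount, removalSum_of_count_eq_zero _ hcount]
  have hg : ∑ d ∈ D, g d = g 1 + g 2 :=
    sum_eq_add 1 2 (by decide) (fun d _ hd => by
      simp [g, removalSum_mulCountOneTwo_of_ne hd.1 hd.2]) hg_of_notMem hg_of_notMem
  have hsum : (s.sum : ℤ) = ∑ d ∈ D, (s.count d : ℤ) * d := by
    exact_mod_cast sum_multiset_count_of_subset s D hD
  have hsplit : ∑ d ∈ D, (d : ℤ) * removalSum mulCountOneTwo d s
      = (∑ d ∈ D, (s.count d : ℤ) * d) * mulCountOneTwo s + ∑ d ∈ D, g d := by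
    rw [sum_mul, ← sum_add_distrib]
    exact sum_congr rfl fun d _ => by ring
  rw [hsplit, hg, ← hsum]
  simp only [g, mulCountOneTwo, Nat.cast_one, Nat.cast_ofNat]
  linear_combination two_mul_removalSum_mulCountOneTwo_one s
    + 2 * two_mul_removalSum_mulCountOneTwo_two s

theorem stmt_9 (n : ℕ) :
    ((n : ℤ) - 3) * (b n : ℤ) =
      ∑ k ∈ Finset.Icc 1 n, ((beta k : ℤ) + (-1) ^ k + 2) * (b (n - k) : ℤ) := by
  have hsum_powers : ∑ d ∈ powersOfTwoUpTo n, (d : ℤ) * ∑ k ∈ (Icc 1 n).filter (d ∣ ·),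
      (b (n - k) : ℤ) = ∑ d ∈ powersOfTwoUpTo n, (d : ℤ) *
        ∑ s ∈ binaryParts n, removalSum mulCountOneTwo d s :=
    sum_congr rfl fun d hd => by rw [sum_filter_dvd_b_sub (mem_powersOfTwoUpTo.1 hd).2]
  have hsum_one : ∑ k ∈ Icc 1 n, (b (n - k) : ℤ) =
      ∑ s ∈ binaryParts n, removalSum mulCountOneTwo 1 s := by
    simpa using sum_filter_dvd_b_sub (n := n) (t := 1) ⟨0, rfl⟩
  calc ((n : ℤ) - 3) * b n
      = ∑ s ∈ binaryParts n, (∑ d ∈ powersOfTwoUpTo n, (d : ℤ) * removalSum mulCountOneTwo d s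
          + removalSum mulCountOneTwo 1 s + 2 * removalSum mulCountOneTwo 2 s) := by
        rw [b_eq_sum_binaryParts, mul_sum]
        refine sum_congr rfl fun s hs => ?_
        rw [sum_mul_removalSum_mulCountOneTwo (toFinset_subset_of_mem_binaryParts hs),
          (mem_binaryParts.1 hs).1]
    _ = ∑ d ∈ powersOfTwoUpTo n, (d : ℤ) * ∑ k ∈ (Icc 1 n).filter (d ∣ ·), (b (n - k) : ℤ)
          + (∑ k ∈ Icc 1 n, (b (n - k) : ℤ)
            + 2 * ∑ k ∈ (Icc 1 n).filter (2 ∣ ·), (b (n - k) : ℤ)) := by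
        rw [hsum_powers, hsum_one, sum_filter_dvd_b_sub (t := 2) ⟨1, rfl⟩]
        simp only [mul_sum, sum_add_distrib, add_assoc]
        rw [sum_comm]
    _ = ∑ k ∈ Icc 1 n, ((beta k : ℤ) + (-1) ^ k + 2) * (b (n - k) : ℤ) := by
        simp only [add_assoc, add_mul _ ((-1 : ℤ) ^ _ + 2), sum_add_distrib, sum_beta_mul,
          sum_neg_one_pow_add_two_mul]
end

section
/- For all n ≥ 0, the forward difference b_{n+1} - b_n equals a_{⌊n/2⌋ + 1}. -/
/-!
Deleting one part `1` maps the binary partitions of `n + 1` that contain a `1` bijectively onto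
`B(n)`, and halving all parts maps those without a `1` (which exist only for `n + 1` even)
bijectively onto `B((n + 1) / 2)`, sending parts `2` to parts `1`. Writing `totalCount k n` for the
total number of parts `k` over `B(n)`, this gives `b (n + 1) = b n + totalCount 2 n`,
`a (n + 1) = a n + totalCount 1 n` and
`totalCount 2 (n + 1) = totalCount 2 n + [2 ∣ n + 1] totalCount 1 ((n + 1) / 2)`,
whence `totalCount 2 (2m) = totalCount 2 (2m + 1) = a (m + 1)` by induction on `m`.
-/

/-- Binary partitions as multisets of parts, so that the bijections below are plain maps. -/
noncomputable def binaryMultisets (n : ℕ) : Finset (Multiset ℕ) :=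
  (binaryPartitions n).map ⟨Nat.Partition.parts, fun _ _ => Nat.Partition.ext⟩

theorem mem_binaryMultisets {n : ℕ} {s : Multiset ℕ} :
    s ∈ binaryMultisets n ↔ s.sum = n ∧ ∀ p ∈ s, ∃ i : ℕ, p = 2 ^ i := by
  simp only [binaryMultisets, binaryPartitions, Finset.mem_map, Finset.mem_filter,
    Finset.mem_univ, true_and]
  constructor
  · rintro ⟨l, hl, rfl⟩
    exact ⟨l.parts_sum, hl⟩
  · rintro ⟨hsum, hs⟩
    refine ⟨⟨s, fun hp => ?_, hsum⟩, hs, rfl⟩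
    obtain ⟨i, rfl⟩ := hs _ hp
    positivity

theorem sum_binaryPartitions {M : Type*} [AddCommMonoid M] (n : ℕ) (f : Multiset ℕ → M) :
    ∑ l ∈ binaryPartitions n, f l.parts = ∑ s ∈ binaryMultisets n, f s := by
  rw [binaryMultisets, Finset.sum_map]
  rfl

theorem binaryMultisets_zero : binaryMultisets 0 = {0} := by
  ext s
  simp only [binaryMultisets, Finset.mem_map, Finset.mem_singleton]
  exact ⟨fun ⟨l, _, hl⟩ => hl ▸ l.partition_zero_parts,
    fun hs => ⟨default, by simp [binaryPartitions], hs ▸ Nat.Partition.partition_zero_parts _⟩⟩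

theorem sum_binaryMultisets_succ {M : Type*} [AddCommMonoid M] (n : ℕ) (f : Multiset ℕ → M) :
    ∑ s ∈ binaryMultisets (n + 1), f s =
      ∑ s ∈ binaryMultisets n, f (1 ::ₘ s) + ∑ s ∈ binaryMultisets (n + 1) with 1 ∉ s, f s := by
  rw [← Finset.sum_filter_add_sum_filter_not _ (1 ∈ ·)]
  congr 1
  refine (Finset.sum_nbij' (1 ::ₘ ·) (·.erase 1) ?_ ?_ ?_ ?_ fun _ _ => rfl).symm
  · intro s hs
    rw [mem_binaryMultisets] at hs
    simp only [Finset.mem_filter, mem_binaryMultisets, Multiset.sum_cons,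
      Multiset.mem_cons_self, and_true]
    refine ⟨by omega, fun p hp => ?_⟩
    rcases Multiset.mem_cons.1 hp with rfl | hp
    exacts [⟨0, rfl⟩, hs.2 p hp]
  · intro s hs
    simp only [Finset.mem_filter, mem_binaryMultisets] at hs ⊢
    obtain ⟨⟨hsum, hpow⟩, h1⟩ := hs
    have hsplit := Multiset.sum_erase h1
    exact ⟨by omega, fun p hp => hpow p (Multiset.mem_of_mem_erase hp)⟩
  · exact fun s _ => Multiset.erase_cons_head 1 s
  · exact fun s hs => Multiset.cons_erase (Finset.mem_filter.1 hs).2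

theorem two_dvd_of_mem_binaryMultisets {n p : ℕ} {s : Multiset ℕ} (hs : s ∈ binaryMultisets n)
    (h1 : 1 ∉ s) (hp : p ∈ s) : 2 ∣ p := by
  obtain ⟨i, rfl⟩ := (mem_binaryMultisets.1 hs).2 p hp
  cases i with
  | zero => exact absurd hp h1
  | succ i => exact dvd_pow_self 2 i.succ_ne_zero

theorem two_dvd_of_one_notMem_binaryMultisets {n : ℕ} {s : Multiset ℕ}
    (hs : s ∈ binaryMultisets n) (h1 : 1 ∉ s) : 2 ∣ n :=
  (mem_binaryMultisets.1 hs).1 ▸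
    Multiset.dvd_sum fun _ hp => two_dvd_of_mem_binaryMultisets hs h1 hp

theorem map_two_mul_map_div_two {s : Multiset ℕ} (h : ∀ p ∈ s, 2 ∣ p) :
    (s.map (· / 2)).map (2 * ·) = s := by
  rw [Multiset.map_map]
  conv_rhs => rw [← Multiset.map_id s]
  exact Multiset.map_congr rfl fun p hp => Nat.mul_div_cancel' (h p hp)

theorem sum_binaryMultisets_two_mul_filter_one_notMem {M : Type*} [AddCommMonoid M] (m : ℕ)
    (f : Multiset ℕ → M) :
    ∑ s ∈ binaryMultisets (2 * m) with 1 ∉ s, f s =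
      ∑ s ∈ binaryMultisets m, f (s.map (2 * ·)) := by
  have heven {s} (hs : s ∈ {s ∈ binaryMultisets (2 * m) | 1 ∉ s}) : ∀ p ∈ s, 2 ∣ p :=
    fun _ => two_dvd_of_mem_binaryMultisets (Finset.mem_filter.1 hs).1 (Finset.mem_filter.1 hs).2
  refine Finset.sum_nbij' (·.map (· / 2)) (·.map (2 * ·)) ?_ ?_ ?_ ?_ ?_
  · intro s hs
    have hsum := congrArg Multiset.sum (map_two_mul_map_div_two (heven hs))
    simp only [Finset.mem_filter, mem_binaryMultisets] at hs ⊢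
    rw [Multiset.sum_map_mul_left, Multiset.map_id', hs.1.1] at hsum
    refine ⟨by omega, fun q hq => ?_⟩
    obtain ⟨p, hp, rfl⟩ := Multiset.mem_map.1 hq
    obtain ⟨i, rfl⟩ := hs.1.2 p hp
    cases i with
    | zero => exact absurd hp hs.2
    | succ i => exact ⟨i, by rw [pow_succ, Nat.mul_div_cancel _ two_pos]⟩
  · intro s hs
    simp only [Finset.mem_filter, mem_binaryMultisets] at hs ⊢
    rw [Multiset.sum_map_mul_left, Multiset.map_id', hs.1]
    refine ⟨⟨rfl, fun q hq => ?_⟩, fun h1 => ?_⟩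
    · obtain ⟨p, hp, rfl⟩ := Multiset.mem_map.1 hq
      obtain ⟨i, rfl⟩ := hs.2 p hp
      exact ⟨i + 1, (pow_succ' 2 i).symm⟩
    · obtain ⟨p, -, hp⟩ := Multiset.mem_map.1 h1
      omega
  · exact fun s hs => map_two_mul_map_div_two (heven hs)
  · intro s _
    rw [Multiset.map_map]
    conv_rhs => rw [← Multiset.map_id s]
    exact Multiset.map_congr rfl fun p _ => by simp
  · exact fun s hs => by rw [map_two_mul_map_div_two (heven hs)]

noncomputable def totalCount (k n : ℕ) : ℕ := ∑ s ∈ binaryMultisets n, s.count k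

theorem sum_filter_one_notMem_eq_zero {M : Type*} [AddCommMonoid M] {n : ℕ}
    (f : Multiset ℕ → M) (hf : ∀ s, 1 ∉ s → f s = 0) :
    ∑ s ∈ binaryMultisets n with 1 ∉ s, f s = 0 :=
  Finset.sum_eq_zero fun s hs => hf s (Finset.mem_filter.1 hs).2

theorem a_succ (n : ℕ) : a (n + 1) = a n + totalCount 1 n := by
  simp only [a, totalCount, sum_binaryPartitions _ fun s => (s.count 1).choose 2,
    sum_binaryMultisets_succ n, ← Finset.sum_add_distrib]
  rw [sum_filter_one_notMem_eq_zero _ fun s h1 => by rw [Multiset.count_eq_zero.2 h1]; rfl,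
    add_zero]
  refine Finset.sum_congr rfl fun s _ => ?_
  rw [Multiset.count_cons_self, Nat.choose_succ_succ', Nat.choose_one_right, add_comm]

theorem b_succ (n : ℕ) : b (n + 1) = b n + totalCount 2 n := by
  simp only [b, totalCount, sum_binaryPartitions _ fun s => s.count 1 * s.count 2,
    sum_binaryMultisets_succ n, ← Finset.sum_add_distrib]
  rw [sum_filter_one_notMem_eq_zero _ fun s h1 => by rw [Multiset.count_eq_zero.2 h1, zero_mul],
    add_zero]
  refine Finset.sum_congr rfl fun s _ => ?_
  rw [Multiset.count_cons_self, Multiset.count_cons_of_ne (by decide), add_one_mul]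

theorem totalCount_two_succ (n : ℕ) :
    totalCount 2 (n + 1) =
      totalCount 2 n + ∑ s ∈ binaryMultisets (n + 1) with 1 ∉ s, s.count 2 := by
  simp only [totalCount, sum_binaryMultisets_succ n,
    Multiset.count_cons_of_ne (show (2 : ℕ) ≠ 1 by decide)]

theorem totalCount_two_two_mul_add_one (m : ℕ) :
    totalCount 2 (2 * m + 1) = totalCount 2 (2 * m) := by
  rw [totalCount_two_succ, add_eq_left]
  exact Finset.sum_eq_zero fun s hs =>
    absurd (two_dvd_of_one_notMem_binaryMultisets (Finset.mem_filter.1 hs).1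
      (Finset.mem_filter.1 hs).2) (by omega)

theorem totalCount_two_two_mul_add_two (m : ℕ) :
    totalCount 2 (2 * m + 2) = totalCount 2 (2 * m + 1) + totalCount 1 (m + 1) := by
  rw [totalCount_two_succ, show 2 * m + 1 + 1 = 2 * (m + 1) by ring,
    sum_binaryMultisets_two_mul_filter_one_notMem, totalCount]
  exact congrArg _ <| Finset.sum_congr rfl fun s _ =>
    Multiset.count_map_eq_count' (2 * ·) s (mul_right_injective₀ two_ne_zero) 1

theorem totalCount_two_two_mul (m : ℕ) : totalCount 2 (2 * m) = a (m + 1) := by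
  induction m with
  | zero => simp [totalCount, a, binaryMultisets_zero]
  | succ m ih =>
    rw [mul_add_one, totalCount_two_two_mul_add_two, totalCount_two_two_mul_add_one, ih,
      a_succ (m + 1)]

theorem totalCount_two (n : ℕ) : totalCount 2 n = a (n / 2 + 1) := by
  obtain ⟨m, rfl | rfl⟩ := Nat.even_or_odd' n
  · rw [totalCount_two_two_mul, Nat.mul_div_cancel_left m two_pos]
  · rw [totalCount_two_two_mul_add_one, totalCount_two_two_mul]
    congr 2
    omega

theorem stmt_10 (n : ℕ) :
    (b (n + 1) : ℤ) - (b n : ℤ) = (a (n / 2 + 1) : ℤ) := by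
  rw [b_succ, totalCount_two]
  push_cast
  ring
end

section
/- For every integer d ≥ 2 and every n, the map pre_2 is injective on the set of d-ary partitions of n with at least two parts: if λ and μ are d-ary partitions of n, each with at least two parts, and pre_2(λ) = pre_2(μ), then λ = μ. -/
def powerSum (s : Multiset ℕ) (e : ℕ) : ℕ := (s.map (· ^ e)).sum

lemma powerSum_one (s : Multiset ℕ) : powerSum s 1 = s.sum := by
  simp [powerSum]

lemma powerSum_cons (a : ℕ) (s : Multiset ℕ) (e : ℕ) :
    powerSum (a ::ₘ s) e = a ^ e + powerSum s e := by
  simp [powerSum]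

lemma pre2_cons (a : ℕ) (s : Multiset ℕ) : pre2 (a ::ₘ s) = pre2 s + s.map (a * ·) := by
  simp only [pre2, Multiset.powersetCard_cons, Multiset.map_add, Multiset.powersetCard_one,
    Multiset.map_map]
  simp [Function.comp_def]

lemma sq_sum_eq_powerSum_two_add_sum_pre2 (s : Multiset ℕ) :
    s.sum ^ 2 = powerSum s 2 + 2 * (pre2 s).sum := by
  induction s using Multiset.induction with
  | empty => simp [powerSum, pre2, Multiset.powersetCard_zero_right]
  | cons a s ih =>
    have hmul : (s.map (a * ·)).sum = a * s.sum := by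
      simpa using Multiset.sum_map_mul_left (s := s) (a := a) (f := id)
    simp only [powerSum, pre2_cons, Multiset.sum_cons, Multiset.map_cons, Multiset.sum_add,
      hmul] at ih ⊢
    linear_combination ih

lemma pre2_map_pow (e : ℕ) (s : Multiset ℕ) : pre2 (s.map (· ^ e)) = (pre2 s).map (· ^ e) := by
  simp only [pre2, Multiset.powersetCard_map, Multiset.map_map]
  exact Multiset.map_congr rfl fun x _ => by simp [Multiset.prod_map_pow]

lemma powerSum_map_pow (s : Multiset ℕ) (e f : ℕ) :
    powerSum (s.map (· ^ e)) f = powerSum s (e * f) := by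
  simp [powerSum, Multiset.map_map, pow_mul]

lemma powerSum_two_pow_eq_of_pre2_eq {S T : Multiset ℕ} (h : pre2 S = pre2 T)
    (hsum : S.sum = T.sum) (k : ℕ) : powerSum S (2 ^ k) = powerSum T (2 ^ k) := by
  induction k with
  | zero => simpa [powerSum_one] using hsum
  | succ k ih =>
    have hS := sq_sum_eq_powerSum_two_add_sum_pre2 (S.map (· ^ 2 ^ k))
    have hT := sq_sum_eq_powerSum_two_add_sum_pre2 (T.map (· ^ 2 ^ k))
    rw [pre2_map_pow, h, ← pre2_map_pow] at hS
    simp only [powerSum_map_pow, ← pow_succ] at hS hT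
    change powerSum S (2 ^ k) ^ 2 = _ at hS
    change powerSum T (2 ^ k) ^ 2 = _ at hT
    rw [ih] at hS
    omega

lemma exists_mul_pow_two_pow_lt (c : ℕ) {N M : ℕ} (hNM : N < M) :
    ∃ k, c * N ^ 2 ^ k < M ^ 2 ^ k := by
  rcases N.eq_zero_or_pos with rfl | hN
  · exact ⟨0, by simpa using hNM⟩
  have hratio : (1 : ℝ) < M / N := by
    rw [one_lt_div (by positivity)]
    exact_mod_cast hNM
  obtain ⟨k, hk⟩ := pow_unbounded_of_one_lt (c : ℝ) hratio
  refine ⟨k, ?_⟩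
  have hle : ((M : ℝ) / N) ^ k ≤ (M / N) ^ 2 ^ k :=
    pow_le_pow_right₀ hratio.le Nat.lt_two_pow_self.le
  have : (c : ℝ) * N ^ 2 ^ k < M ^ 2 ^ k := by
    rw [← lt_div_iff₀ (by positivity), ← div_pow]
    exact hk.trans_le hle
  exact_mod_cast this

lemma le_of_forall_powerSum_two_pow_eq {S T : Multiset ℕ}
    (hpow : ∀ k, powerSum S (2 ^ k) = powerSum T (2 ^ k)) {a b : ℕ} (ha : a ∈ S)
    (hb : ∀ t ∈ T, t ≤ b) : a ≤ b := by
  by_contra! hba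
  obtain ⟨k, hk⟩ := exists_mul_pow_two_pow_lt (Multiset.card T) hba
  have hS : a ^ 2 ^ k ≤ powerSum S (2 ^ k) :=
    Multiset.le_sum_of_mem (Multiset.mem_map_of_mem (· ^ 2 ^ k) ha)
  have hT : powerSum T (2 ^ k) ≤ Multiset.card T * b ^ 2 ^ k := by
    simpa [powerSum] using Multiset.sum_le_card_nsmul (T.map (· ^ 2 ^ k)) (b ^ 2 ^ k) (by
      simpa using fun t ht => Nat.pow_le_pow_left (hb t ht) _)
  have := hpow k
  omega

lemma eq_of_forall_powerSum_two_pow_eq {S T : Multiset ℕ} (hS : 0 ∉ S) (hT : 0 ∉ T)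
    (hpow : ∀ k, powerSum S (2 ^ k) = powerSum T (2 ^ k)) : S = T := by
  induction S using Multiset.strongInductionOn generalizing T with
  | ih S ih =>
  rcases eq_or_ne S 0 with rfl | hS0
  · refine (Multiset.eq_zero_of_forall_notMem fun b hb => hT ?_).symm
    exact Nat.le_zero.mp (le_of_forall_powerSum_two_pow_eq (fun k => (hpow k).symm) hb
      (by simp)) ▸ hb
  rcases eq_or_ne T 0 with rfl | hT0
  · refine Multiset.eq_zero_of_forall_notMem fun a ha => hS ?_
    exact Nat.le_zero.mp (le_of_forall_powerSum_two_pow_eq hpow ha (by simp)) ▸ ha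
  obtain ⟨a, haS, ha⟩ := Multiset.exists_max_image id hS0
  obtain ⟨b, hbT, hb⟩ := Multiset.exists_max_image id hT0
  obtain rfl : a = b := le_antisymm (le_of_forall_powerSum_two_pow_eq hpow haS hb)
    (le_of_forall_powerSum_two_pow_eq (fun k => (hpow k).symm) hbT ha)
  rw [← Multiset.cons_erase haS, ← Multiset.cons_erase hbT] at hpow ⊢
  congr 1
  refine ih _ (Multiset.erase_lt.mpr haS) (fun h => hS (Multiset.mem_of_mem_erase h))
    (fun h => hT (Multiset.mem_of_mem_erase h)) fun k => ?_
  simpa only [powerSum_cons, Nat.add_left_cancel_iff] using hpow k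

theorem stmt_14_general (n : ℕ) (P Q : Nat.Partition n)
    (h : pre2 P.parts = pre2 Q.parts) : P = Q := by
  have hsum : P.parts.sum = Q.parts.sum := by rw [P.parts_sum, Q.parts_sum]
  exact Nat.Partition.ext <| eq_of_forall_powerSum_two_pow_eq
    (fun h0 => (P.parts_pos h0).false) (fun h0 => (Q.parts_pos h0).false)
    (powerSum_two_pow_eq_of_pre2_eq h hsum)

theorem stmt_14 (d : ℕ) (hd : 2 ≤ d) (n : ℕ) (P Q : Nat.Partition n)
    (hPd : ∀ p ∈ P.parts, ∃ i : ℕ, p = d ^ i)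
    (hQd : ∀ p ∈ Q.parts, ∃ i : ℕ, p = d ^ i)
    (hP2 : 2 ≤ Multiset.card P.parts) (hQ2 : 2 ≤ Multiset.card Q.parts)
    (h : pre2 P.parts = pre2 Q.parts) : P = Q :=
  stmt_14_general n P Q h
end

section
/- For every integer d ≥ 2 and all n ≥ 0, a_n(d) = Σ_{i ≥ 1} (i-1)·|P(n-i, d)|, where the sum is over integers i with 1 ≤ i ≤ n. -/
open Classical in
/-- The finset of `d`-ary partitions of `n`: partitions all of whose parts are powers of `d`. -/
noncomputable def daryPartitions (d n : ℕ) : Finset (Nat.Partition n) :=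
  Finset.univ.filter fun l => ∀ p ∈ l.parts, ∃ i : ℕ, p = d ^ i

/-- `aD d n = m₁(ImP₂(n, d))`: the total number of parts equal to 1 in the image of `pre2`
on `d`-ary partitions of `n` with at least two parts; by injectivity this equals
`∑_{λ ∈ P(n,d)} C(m₁(λ), 2)`. -/
noncomputable def aD (d n : ℕ) : ℕ :=
  ∑ l ∈ daryPartitions d n, Nat.choose (l.parts.count 1) 2

/-!
Write `C(m₁(λ), 2) = ∑_{1 ≤ i ≤ m₁(λ)} (i - 1)` and exchange the two sums: the coefficient of
`i - 1` is the number of `d`-ary partitions of `n` with at least `i` parts equal to `1`.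
Deleting `i` of those ones is a bijection onto the `d`-ary partitions of `n - i`,
since `1 = d⁰` is itself a power of `d`.
-/

open Finset

namespace Nat

theorem choose_two_eq_sum_Icc (m : ℕ) : m.choose 2 = ∑ i ∈ Icc 1 m, (i - 1) := by
  induction m with
  | zero => simp
  | succ k ih =>
    rw [sum_Icc_succ_top (by omega), ← ih, choose_succ_succ', choose_one_right,
      add_tsub_cancel_right, add_comm]

theorem choose_two_eq_sum_Icc_ite_s15 {m n : ℕ} (hmn : m ≤ n) :
    m.choose 2 = ∑ i ∈ Icc 1 n, if i ≤ m then i - 1 else 0 := by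
  rw [choose_two_eq_sum_Icc, ← sum_filter]
  congr 1
  ext i
  simp only [mem_Icc, mem_filter]
  omega

namespace Partition

variable {n : ℕ}

theorem count_parts_le (l : n.Partition) (a : ℕ) : l.parts.count a ≤ n := by
  have hcard : Multiset.card l.parts • 1 ≤ l.parts.sum :=
    Multiset.card_nsmul_le_sum fun _ hx => l.parts_pos hx
  rw [smul_eq_mul, mul_one, l.parts_sum] at hcard
  exact (Multiset.count_le_card a l.parts).trans hcard

noncomputable def removeOnes (l : n.Partition) {j : ℕ} (hj : j ≤ l.parts.count 1) :
    (n - j).Partition where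
  parts := l.parts - Multiset.replicate j 1
  parts_pos hi := l.parts_pos (Multiset.mem_of_le (Multiset.sub_le_self _ _) hi)
  parts_sum := by
    have hsum := congrArg Multiset.sum
      (tsub_add_cancel_of_le (Multiset.le_count_iff_replicate_le.1 hj))
    rw [Multiset.sum_add, Multiset.sum_replicate, l.parts_sum, smul_eq_mul, mul_one] at hsum
    omega

def addOnes {j : ℕ} (hjn : j ≤ n) (m : (n - j).Partition) : n.Partition where
  parts := m.parts + Multiset.replicate j 1
  parts_pos hi := by
    rcases Multiset.mem_add.1 hi with hm | hone
    · exact m.parts_pos hm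
    · rw [Multiset.eq_of_mem_replicate hone]
      exact one_pos
  parts_sum := by
    rw [Multiset.sum_add, Multiset.sum_replicate, m.parts_sum, smul_eq_mul, mul_one]
    omega

@[simp]
theorem removeOnes_parts (l : n.Partition) {j : ℕ} (hj : j ≤ l.parts.count 1) :
    (l.removeOnes hj).parts = l.parts - Multiset.replicate j 1 := rfl

@[simp]
theorem addOnes_parts {j : ℕ} (hjn : j ≤ n) (m : (n - j).Partition) :
    (addOnes hjn m).parts = m.parts + Multiset.replicate j 1 := rfl

end Partition

end Nat

theorem mem_daryPartitions {d n : ℕ} {l : n.Partition} :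
    l ∈ daryPartitions d n ↔ ∀ p ∈ l.parts, ∃ i : ℕ, p = d ^ i := by
  simp [daryPartitions]

theorem card_daryPartitions_le_count_one {d n j : ℕ} (hjn : j ≤ n) :
    #{l ∈ daryPartitions d n | j ≤ l.parts.count 1} = #(daryPartitions d (n - j)) := by
  refine card_bij' (fun l hl => l.removeOnes (mem_filter.1 hl).2)
    (fun m _ => Nat.Partition.addOnes hjn m) ?_ ?_ ?_ ?_
  · intro l hl
    simp only [mem_daryPartitions, Nat.Partition.removeOnes_parts]
    exact fun p hp => mem_daryPartitions.1 (mem_filter.1 hl).1 p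
      (Multiset.mem_of_le (Multiset.sub_le_self _ _) hp)
  · intro m hm
    simp only [mem_filter, mem_daryPartitions, Nat.Partition.addOnes_parts, Multiset.mem_add,
      Multiset.count_add, Multiset.count_replicate_self]
    refine ⟨fun p hp => ?_, le_add_self⟩
    rcases hp with hm' | hone
    · exact mem_daryPartitions.1 hm p hm'
    · exact ⟨0, by rw [Multiset.eq_of_mem_replicate hone, pow_zero]⟩
  · intro l hl
    ext1
    exact tsub_add_cancel_of_le (Multiset.le_count_iff_replicate_le.1 (mem_filter.1 hl).2)
  · intro m _
    ext1
    exact add_tsub_cancel_right _ _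

theorem stmt_15_general (d : ℕ) (n : ℕ) :
    aD d n = ∑ i ∈ Finset.Icc 1 n, (i - 1) * (daryPartitions d (n - i)).card := by
  calc aD d n
      = ∑ l ∈ daryPartitions d n, ∑ i ∈ Icc 1 n, if i ≤ l.parts.count 1 then i - 1 else 0 :=
        sum_congr rfl fun l _ => Nat.choose_two_eq_sum_Icc_ite_s15 (l.count_parts_le 1)
    _ = ∑ i ∈ Icc 1 n, ∑ l ∈ daryPartitions d n, if i ≤ l.parts.count 1 then i - 1 else 0 :=
        sum_comm
    _ = ∑ i ∈ Icc 1 n, (i - 1) * #(daryPartitions d (n - i)) := by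
        refine sum_congr rfl fun i hi => ?_
        rw [← sum_filter, sum_const, smul_eq_mul, mul_comm,
          card_daryPartitions_le_count_one (mem_Icc.1 hi).2]

theorem stmt_15 (d : ℕ) (hd : 2 ≤ d) (n : ℕ) :
    aD d n = ∑ i ∈ Finset.Icc 1 n, (i - 1) * (daryPartitions d (n - i)).card :=
  stmt_15_general d n
end

section
/- For every integer d ≥ 2 and all n ≥ 1, the forward difference a_{n+1}(d) - a_n(d) equals |P(dn - d, d)|, the number of d-ary partitions of d(n-1). -/
open Finset

theorem sum_daryPartitions_succ {M : Type*} [AddCommMonoid M] (d n : ℕ) {f : ℕ → M}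
    (hf : f 0 = 0) :
    ∑ l ∈ daryPartitions d (n + 1), f (l.parts.count 1) =
      ∑ l ∈ daryPartitions d n, f (l.parts.count 1 + 1) := by
  classical
  let e : {l : (n + 1).Partition // 1 ∈ l.parts} ≃ n.Partition :=
    Nat.Partition.partitionWithPartEquiv le_rfl (Nat.le_add_left 1 n)
  have he (l) : (e l).parts = l.1.parts.erase 1 := rfl
  have he_symm (l) : (e.symm l).1.parts = 1 ::ₘ l.parts := rfl
  have hsupp : ∀ l ∈ daryPartitions d (n + 1), f (l.parts.count 1) ≠ 0 → 1 ∈ l.parts :=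
    fun l _ h => Multiset.count_ne_zero.1 fun h0 => h (h0 ▸ hf)
  rw [← sum_filter_of_ne hsupp]
  refine sum_bij' (fun l hl => e ⟨l, (mem_filter.1 hl).2⟩) (fun l _ => (e.symm l).1)
    (fun l hl => ?_) (fun l hl => ?_) (fun l hl => ?_) (fun l hl => ?_) (fun l hl => ?_)
  · refine mem_daryPartitions.2 fun p hp => mem_daryPartitions.1 (mem_filter.1 hl).1 p ?_
    exact Multiset.mem_of_mem_erase (he _ ▸ hp)
  · refine mem_filter.2 ⟨mem_daryPartitions.2 fun p hp => ?_,
      he_symm l ▸ Multiset.mem_cons_self 1 _⟩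
    rw [he_symm, Multiset.mem_cons] at hp
    obtain rfl | hp := hp
    · exact ⟨0, rfl⟩
    · exact mem_daryPartitions.1 hl p hp
  · exact congrArg Subtype.val (e.symm_apply_apply _)
  · exact e.apply_symm_apply l
  · have h1 := (mem_filter.1 hl).2
    rw [he, Multiset.count_erase_self,
      Nat.sub_add_cancel (Multiset.one_le_count_iff_mem.2 h1)]

theorem card_filter_le_count_one_daryPartitions (d n k : ℕ) :
    #{l ∈ daryPartitions d (n + k) | k ≤ l.parts.count 1} = #(daryPartitions d n) := by
  classical
  induction k with
  | zero => simp
  | succ k ih =>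
    have key := sum_daryPartitions_succ (M := ℕ) d (n + k)
      (f := fun m => if k + 1 ≤ m then 1 else 0) (by simp)
    simp only [add_le_add_iff_right, sum_boole, Nat.cast_id] at key
    rw [← add_assoc, key, ih]

theorem sum_count_one_daryPartitions_succ (d n : ℕ) :
    ∑ l ∈ daryPartitions d (n + 1), l.parts.count 1 =
      ∑ l ∈ daryPartitions d n, l.parts.count 1 + #(daryPartitions d n) := by
  rw [sum_daryPartitions_succ d n (f := fun m => m) rfl, sum_add_distrib, card_eq_sum_ones]

theorem aD_succ (d n : ℕ) :
    aD d (n + 1) = aD d n + ∑ l ∈ daryPartitions d n, l.parts.count 1 := by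
  rw [aD, aD, sum_daryPartitions_succ d n (f := (Nat.choose · 2)) rfl, ← sum_add_distrib]
  refine sum_congr rfl fun l _ => ?_
  rw [Nat.choose_succ_succ, Nat.choose_one_right, add_comm]

theorem Multiset.map_mul_map_div_of_dvd {d : ℕ} {s : Multiset ℕ} (h : ∀ p ∈ s, d ∣ p) :
    (s.map (· / d)).map (d * ·) = s := by
  rw [Multiset.map_map]
  exact (Multiset.map_congr rfl fun p hp => Nat.mul_div_cancel' (h p hp)).trans (Multiset.map_id _)

namespace Nat.Partition

def mulParts {d m : ℕ} (hd : 0 < d) (l : m.Partition) : (d * m).Partition where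
  parts := l.parts.map (d * ·)
  parts_pos hp := by
    obtain ⟨q, hq, rfl⟩ := Multiset.mem_map.1 hp
    exact Nat.mul_pos hd (l.parts_pos hq)
  parts_sum := by rw [Multiset.sum_map_mul_left, Multiset.map_id', l.parts_sum]

def divParts {d m : ℕ} (hd : 0 < d) (l : (d * m).Partition) (hdvd : ∀ p ∈ l.parts, d ∣ p) :
    m.Partition where
  parts := l.parts.map (· / d)
  parts_pos hp := by
    obtain ⟨q, hq, rfl⟩ := Multiset.mem_map.1 hp
    exact Nat.div_pos (Nat.le_of_dvd (l.parts_pos hq) (hdvd q hq)) hd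
  parts_sum := by
    have := congrArg Multiset.sum (Multiset.map_mul_map_div_of_dvd hdvd)
    rw [Multiset.sum_map_mul_left, Multiset.map_id', l.parts_sum] at this
    exact Nat.eq_of_mul_eq_mul_left hd this

end Nat.Partition

theorem dvd_of_mem_daryPartitions {d n : ℕ} {l : n.Partition} (hl : l ∈ daryPartitions d n)
    {p : ℕ} (hp : p ∈ l.parts) (hp1 : p ≠ 1) : d ∣ p := by
  obtain ⟨_ | i, rfl⟩ := mem_daryPartitions.1 hl p hp
  · exact absurd (pow_zero d) hp1
  · exact dvd_pow_self d i.succ_ne_zero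

theorem card_filter_one_notMem_daryPartitions_mul {d : ℕ} (hd : 2 ≤ d) (m : ℕ) :
    #{l ∈ daryPartitions d (d * m) | 1 ∉ l.parts} = #(daryPartitions d m) := by
  have hd0 : 0 < d := by omega
  have hdvd (l) (hl : l ∈ {l ∈ daryPartitions d (d * m) | 1 ∉ l.parts}) :
      ∀ p ∈ l.parts, d ∣ p := fun p hp =>
    dvd_of_mem_daryPartitions (mem_filter.1 hl).1 hp (ne_of_mem_of_not_mem hp (mem_filter.1 hl).2)
  refine card_bij' (fun l hl => l.divParts hd0 (hdvd l hl)) (fun l _ => l.mulParts hd0)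
    (fun l hl => ?_) (fun l hl => ?_) (fun l hl => ?_) (fun l hl => ?_)
  · refine mem_daryPartitions.2 fun q hq => ?_
    obtain ⟨p, hp, rfl⟩ := Multiset.mem_map.1 hq
    obtain ⟨_ | i, rfl⟩ := mem_daryPartitions.1 (mem_filter.1 hl).1 p hp
    · exact absurd hp (mem_filter.1 hl).2
    · exact ⟨i, by rw [pow_succ, Nat.mul_div_cancel _ hd0]⟩
  · refine mem_filter.2 ⟨mem_daryPartitions.2 fun q hq => ?_, fun h1 => ?_⟩
    · obtain ⟨p, hp, rfl⟩ := Multiset.mem_map.1 hq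
      obtain ⟨i, rfl⟩ := mem_daryPartitions.1 hl p hp
      exact ⟨i + 1, (pow_succ' d i).symm⟩
    · obtain ⟨p, -, h⟩ := Multiset.mem_map.1 h1
      exact absurd (Nat.eq_one_of_mul_eq_one_right h) (by omega)
  · exact Nat.Partition.ext (Multiset.map_mul_map_div_of_dvd (hdvd l hl))
  · ext1
    change (l.parts.map (d * ·)).map (· / d) = l.parts
    rw [Multiset.map_map]
    exact (Multiset.map_congr rfl fun p _ => Nat.mul_div_cancel_left p hd0).trans
      (Multiset.map_id _)

theorem dvd_count_one_of_mem_daryPartitions {d n : ℕ} (hn : d ∣ n) {l : n.Partition}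
    (hl : l ∈ daryPartitions d n) : d ∣ l.parts.count 1 := by
  classical
  have hsum : l.parts.count 1 + (l.parts.filter (· ≠ 1)).sum = l.parts.sum := by
    conv_rhs => rw [← Multiset.filter_add_not (· = 1) l.parts]
    rw [Multiset.sum_add, Multiset.filter_eq', Multiset.sum_replicate, smul_eq_mul, mul_one]
  rw [l.parts_sum] at hsum
  have hrest : d ∣ (l.parts.filter (· ≠ 1)).sum := Multiset.dvd_sum fun p hp =>
    dvd_of_mem_daryPartitions hl (Multiset.mem_of_mem_filter hp) (Multiset.mem_filter.1 hp).2
  rwa [← hsum, Nat.dvd_add_left hrest] at hn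

/- Split by whether `1` is a part. Since `m₁ ≡ d (m + 1) ≡ 0 [MOD d]`, a partition with a part `1`
has at least `d` of them, and removing `d` ones leaves a partition of `d m`; one without ones is `d`
times a partition of `m + 1`. -/
theorem card_daryPartitions_mul_succ {d : ℕ} (hd : 2 ≤ d) (m : ℕ) :
    #(daryPartitions d (d * (m + 1))) =
      #(daryPartitions d (d * m)) + #(daryPartitions d (m + 1)) := by
  classical
  rw [← card_filter_add_card_filter_not (p := fun l => 1 ∈ l.parts),
    card_filter_one_notMem_daryPartitions_mul hd,
    ← card_filter_le_count_one_daryPartitions d (d * m) d, mul_add_one]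
  congr 2
  refine filter_congr fun l hl => ?_
  rw [← Multiset.one_le_count_iff_mem]
  have := dvd_count_one_of_mem_daryPartitions ⟨m + 1, (mul_add_one d m).symm⟩ hl
  constructor
  · exact fun h => Nat.le_of_dvd h this
  · omega

theorem sum_count_one_daryPartitions_succ_eq_card {d : ℕ} (hd : 2 ≤ d) (k : ℕ) :
    ∑ l ∈ daryPartitions d (k + 1), l.parts.count 1 = #(daryPartitions d (d * k)) := by
  induction k with
  | zero =>
    have hnone (l : (0 : ℕ).Partition) : l.parts.count 1 = 0 :=
      Multiset.count_eq_zero.2 fun h => absurd (Nat.Partition.le_of_mem_parts h) (by omega)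
    rw [sum_count_one_daryPartitions_succ, sum_eq_zero fun l _ => hnone l, zero_add, mul_zero]
  | succ k ih =>
    rw [sum_count_one_daryPartitions_succ, ih, card_daryPartitions_mul_succ hd]

theorem stmt_17 (d : ℕ) (hd : 2 ≤ d) (n : ℕ) (hn : 1 ≤ n) :
    (aD d (n + 1) : ℤ) - (aD d n : ℤ) = ((daryPartitions d (d * n - d)).card : ℤ) := by
  obtain ⟨k, rfl⟩ := Nat.exists_eq_add_of_le' hn
  rw [aD_succ, sum_count_one_daryPartitions_succ_eq_card hd, mul_add_one, Nat.add_sub_cancel]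
  push_cast
  ring
end
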